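/- Let m : R^2 \ {0} → C^2 be continuous, homogeneous of degree 0 (m(λξ) = m(ξ) for all λ > 0), satisfying the reality condition m(ξ) = conjugate(m(-ξ)) for all ξ, the divergence-free condition ξ · m(ξ) = 0 for all ξ ≠ 0, and suppose m is not odd, i.e. there exists ξ with m(ξ) + m(-ξ) ≠ 0. Then there exist k1, k2 in Z^2 with |k1| = |k2| such that the two real vectors m(k1) + m(-k1) and m(k2) + m(-k2) form a basis of R^2. -/

import Mathlib

/-!
Set `S(ξ) = m(ξ) + m(-ξ)`, a real vector field. It is even and homogeneous of degree `0`, so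
`U = {ξ ≠ 0 | S ξ ≠ 0}` is an open union of lines through the origin, non-empty because `m` is
not odd; and `S ξ ⊥ ξ` by the divergence-free condition. In the plane, nonzero vectors orthogonal
to two independent vectors are themselves independent, so it suffices to find two independent
integer vectors of the same length in `U`. Identifying `ℝ²` with `ℂ`, the squares `(1 + i t)²`
meet every line, so a non-empty open set of parameters `t` lands in `U`. Two rational parameters
`p/q`, `r/s` in it whose squares are not parallel give the Gaussian integers `(q + i p)²` and
`(s + i r)²`, of lengths `p² + q²` and `r² + s²`; multiplying each by the length of the other
equalizes the lengths.
-/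

/-- The real vector in `ℝ²` associated to an integer vector. -/
noncomputable def intVec2 (v : Fin 2 → ℤ) : EuclideanSpace ℝ (Fin 2) :=
  WithLp.toLp 2 (fun i => (v i : ℝ))

/-- The real vector `m(ξ) + m(-ξ)` (real by the reality condition), taken componentwise
via real parts. -/
noncomputable def symPart (m : EuclideanSpace ℝ (Fin 2) → EuclideanSpace ℂ (Fin 2))
    (ξ : EuclideanSpace ℝ (Fin 2)) : EuclideanSpace ℝ (Fin 2) :=
  WithLp.toLp 2 (fun i => (m ξ i + m (-ξ) i).re)

open Module InnerProductSpace

local notation "ℝ²" => EuclideanSpace ℝ (Fin 2)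

section FinrankTwo

variable {E : Type*} [NormedAddCommGroup E] [InnerProductSpace ℝ E]

lemma eq_zero_of_inner_eq_zero_of_linearIndependent (hE : finrank ℝ E = 2) {u v x : E}
    (huv : LinearIndependent ℝ ![u, v]) (hu : ⟪u, x⟫_ℝ = 0) (hv : ⟪v, x⟫_ℝ = 0) : x = 0 :=
  ext_inner_left_basis (basisOfLinearIndependentOfCardEqFinrank huv (by simp [hE])) fun i => by
    fin_cases i <;> simp [hu, hv]

lemma linearIndependent_pair_of_inner_eq_zero (hE : finrank ℝ E = 2) {u v x y : E}
    (huv : LinearIndependent ℝ ![u, v]) (hx : x ≠ 0) (hy : y ≠ 0)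
    (hxu : ⟪u, x⟫_ℝ = 0) (hyv : ⟪v, y⟫_ℝ = 0) : LinearIndependent ℝ ![x, y] := by
  refine (LinearIndependent.pair_iff' hx).2 fun c hcxy => hy ?_
  refine eq_zero_of_inner_eq_zero_of_linearIndependent hE huv ?_ hyv
  rw [← hcxy, inner_smul_right, hxu, mul_zero]

end FinrankTwo

section RationalPoints

/-- `(1 + i t)²` under `ℂ ≃ ℝ²`. -/
noncomputable def sqParam (t : ℝ) : ℝ² := !₂[1 - t ^ 2, 2 * t]

/-- `(q + i p)²` under `ℂ ≃ ℝ²`. -/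
def sqInt (p q : ℤ) : Fin 2 → ℤ := ![q ^ 2 - p ^ 2, 2 * p * q]

lemma sqParam_ne_zero (t : ℝ) : sqParam t ≠ 0 := fun h => by
  have h₀ : 1 - t ^ 2 = 0 := congrArg (· 0) h
  have h₁ : 2 * t = 0 := congrArg (· 1) h
  nlinarith

lemma continuous_sqParam : Continuous sqParam := by
  unfold sqParam
  fun_prop

lemma exists_smul_eq_sqParam {x : ℝ²} (hx : x ≠ 0) :
    ∃ t c : ℝ, c ≠ 0 ∧ c • x = sqParam t := by
  have hr : x 0 ^ 2 + x 1 ^ 2 = ‖x‖ ^ 2 := by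
    rw [EuclideanSpace.real_norm_sq_eq, Fin.sum_univ_two]
  have hr₀ : ‖x‖ ≠ 0 := norm_ne_zero_iff.2 hx
  by_cases h : x 0 + ‖x‖ = 0
  · have hx₀ : x 0 = -‖x‖ := by linarith
    have hx₁ : x 1 = 0 := pow_eq_zero_iff two_ne_zero |>.1 (by rw [hx₀] at hr; linarith)
    refine ⟨0, -‖x‖⁻¹, by simpa using hr₀, ?_⟩
    ext i
    fin_cases i <;> simp [sqParam, hx₀, hx₁, hr₀]
  -- the half-angle substitution `t = tan (θ / 2) = sin θ / (1 + cos θ)`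
  · refine ⟨x 1 / (x 0 + ‖x‖), 2 / (x 0 + ‖x‖), by simpa using h, ?_⟩
    ext i
    fin_cases i
    · show 2 / (x 0 + ‖x‖) * x 0 = 1 - (x 1 / (x 0 + ‖x‖)) ^ 2
      field_simp
      linear_combination hr
    · show 2 / (x 0 + ‖x‖) * x 1 = 2 * (x 1 / (x 0 + ‖x‖))
      ring

lemma linearIndependent_sqParam {s t : ℝ} (hst : s ≠ t) (h : s * t ≠ -1) :
    LinearIndependent ℝ ![sqParam s, sqParam t] := by
  refine (LinearIndependent.pair_iff' (sqParam_ne_zero s)).2 fun c hc => ?_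
  have h₀ : c * (1 - s ^ 2) = 1 - t ^ 2 := congrArg (· 0) hc
  have h₁ : c * (2 * s) = 2 * t := congrArg (· 1) hc
  have : (t - s) * (1 + s * t) = 0 := by linear_combination s * h₀ - (1 - s ^ 2) / 2 * h₁
  rcases mul_eq_zero.1 this with h' | h'
  · exact hst (by linarith)
  · exact h (by linarith)

lemma intVec2_smul (N : ℤ) (v : Fin 2 → ℤ) : intVec2 (N • v) = (N : ℝ) • intVec2 v := by
  ext i
  simp [intVec2]

lemma intVec2_sqInt (p q : ℤ) (hq : q ≠ 0) :
    intVec2 (sqInt p q) = ((q : ℝ) ^ 2) • sqParam (p / q) := by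
  ext i
  fin_cases i
  · show ((q ^ 2 - p ^ 2 : ℤ) : ℝ) = (q : ℝ) ^ 2 * (1 - (p / q : ℝ) ^ 2)
    push_cast
    field_simp
  · show ((2 * p * q : ℤ) : ℝ) = (q : ℝ) ^ 2 * (2 * (p / q : ℝ))
    push_cast
    field_simp

lemma norm_intVec2_sqInt (p q : ℤ) : ‖intVec2 (sqInt p q)‖ = p ^ 2 + q ^ 2 := by
  rw [EuclideanSpace.norm_eq, Real.sqrt_eq_iff_eq_sq (by positivity) (by positivity),
    Fin.sum_univ_two]
  show ‖((q ^ 2 - p ^ 2 : ℤ) : ℝ)‖ ^ 2 + ‖((2 * p * q : ℤ) : ℝ)‖ ^ 2 = _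
  simp only [Real.norm_eq_abs, sq_abs]
  push_cast
  ring

lemma infinite_setOf_ratCast_mem {V : Set ℝ} (hV : IsOpen V) (hne : V.Nonempty) :
    {q : ℚ | (q : ℝ) ∈ V}.Infinite := by
  obtain ⟨q, hq⟩ := Rat.denseRange_cast.exists_mem_open hV hne
  exact infinite_of_mem_nhds q ((hV.preimage Rat.continuous_coe_real).mem_nhds hq)

lemma exists_ratCast_pair_mem {V : Set ℝ} (hV : IsOpen V) (hne : V.Nonempty) :
    ∃ a b : ℚ, a ≠ b ∧ a * b ≠ -1 ∧ (a : ℝ) ∈ V ∧ (b : ℝ) ∈ V := by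
  have hinf := infinite_setOf_ratCast_mem hV hne
  obtain ⟨a, ha⟩ := hinf.nonempty
  obtain ⟨b, hb, hab⟩ := (hinf.sdiff (Set.toFinite {a, -a⁻¹})).nonempty
  simp only [Set.mem_insert_iff, Set.mem_singleton_iff, not_or] at hab
  refine ⟨a, b, Ne.symm hab.1, fun h => hab.2 ?_, ha, hb⟩
  have ha₀ : a ≠ 0 := by rintro rfl; simp at h
  field_simp
  linear_combination h

theorem exists_intVec2_pair_mem {U : Set ℝ²} (hU : IsOpen U)
    (hsmul : ∀ x ∈ U, ∀ c : ℝ, c ≠ 0 → c • x ∈ U) {x : ℝ²} (hx : x ∈ U) (hx₀ : x ≠ 0) :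
    ∃ k₁ k₂ : Fin 2 → ℤ, ‖intVec2 k₁‖ = ‖intVec2 k₂‖ ∧ intVec2 k₁ ∈ U ∧ intVec2 k₂ ∈ U ∧
      LinearIndependent ℝ ![intVec2 k₁, intVec2 k₂] := by
  obtain ⟨t, c, hc, hct⟩ := exists_smul_eq_sqParam hx₀
  obtain ⟨a, b, hab, hab', ha, hb⟩ := exists_ratCast_pair_mem (hU.preimage continuous_sqParam)
    ⟨t, by rw [Set.mem_preimage, ← hct]; exact hsmul x hx c hc⟩
  have hk (N : ℤ) (r : ℚ) :
      intVec2 (N • sqInt r.num r.den) = ((N * r.den ^ 2 : ℤ) : ℝ) • sqParam r := by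
    rw [intVec2_smul, intVec2_sqInt _ _ (by exact_mod_cast r.den_nz), smul_smul, Rat.cast_def]
    push_cast
    rfl
  refine ⟨(b.num ^ 2 + b.den ^ 2) • sqInt a.num a.den,
    (a.num ^ 2 + a.den ^ 2) • sqInt b.num b.den, ?_, ?_, ?_, ?_⟩
  · simp only [intVec2_smul, norm_smul, norm_intVec2_sqInt, Real.norm_eq_abs]
    push_cast
    rw [abs_of_pos (by positivity), abs_of_pos (by positivity), mul_comm]
  · rw [hk]
    exact hsmul _ ha _ (by positivity)
  · rw [hk]
    exact hsmul _ hb _ (by positivity)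
  · rw [hk, hk, LinearIndependent.pair_smul_smul_iff (Ne.isUnit (by positivity))
      (Ne.isUnit (by positivity))]
    exact linearIndependent_sqParam (by exact_mod_cast hab) (by exact_mod_cast hab')

end RationalPoints

section Multiplier

variable (m : ℝ² → EuclideanSpace ℂ (Fin 2))

lemma symPart_neg (ξ : ℝ²) : symPart m (-ξ) = symPart m ξ := by
  ext i
  simp [symPart, add_comm]

lemma symPart_smul (hhom : ∀ ξ : ℝ², ξ ≠ 0 → ∀ l : ℝ, 0 < l → m (l • ξ) = m ξ)
    {ξ : ℝ²} (hξ : ξ ≠ 0) {c : ℝ} (hc : c ≠ 0) : symPart m (c • ξ) = symPart m ξ := by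
  have hpos (l : ℝ) (hl : 0 < l) : symPart m (l • ξ) = symPart m ξ := by
    ext i
    simp [symPart, ← smul_neg, hhom ξ hξ l hl, hhom (-ξ) (neg_ne_zero.2 hξ) l hl]
  rcases hc.lt_or_gt with hc | hc
  · rw [← neg_neg c, neg_smul, symPart_neg, hpos _ (neg_pos.2 hc)]
  · exact hpos c hc

lemma inner_symPart_self (hdiv : ∀ ξ : ℝ², ξ ≠ 0 → ∑ i : Fin 2, (ξ i : ℂ) * m ξ i = 0)
    {ξ : ℝ²} (hξ : ξ ≠ 0) : ⟪ξ, symPart m ξ⟫_ℝ = 0 := by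
  have hneg := hdiv (-ξ) (neg_ne_zero.2 hξ)
  simp only [PiLp.neg_apply, Complex.ofReal_neg, neg_mul, Finset.sum_neg_distrib,
    neg_eq_zero] at hneg
  have hsum : ∑ i : Fin 2, (ξ i : ℂ) * (m ξ i + m (-ξ) i) = 0 := by
    simp only [mul_add, Finset.sum_add_distrib, hdiv ξ hξ, hneg, add_zero]
  simpa [symPart, PiLp.inner_apply, Complex.re_sum, Complex.re_ofReal_mul, mul_comm]
    using congrArg Complex.re hsum

lemma symPart_ne_zero
    (hreal : ∀ ξ : ℝ², ξ ≠ 0 → ∀ i : Fin 2, m ξ i = starRingEnd ℂ (m (-ξ) i))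
    {ξ : ℝ²} (hξ : ξ ≠ 0) (h : m ξ + m (-ξ) ≠ 0) : symPart m ξ ≠ 0 := by
  contrapose! h
  ext i
  have hre := congrArg (· i) h
  have him : (m ξ i + m (-ξ) i).im = 0 := by
    rw [hreal ξ hξ i]
    simp
  exact Complex.ext (by simpa [symPart] using hre) (by simpa using him)

lemma continuousOn_symPart (hcont : ContinuousOn m {ξ | ξ ≠ 0}) :
    ContinuousOn (symPart m) {ξ | ξ ≠ 0} := by
  have hneg : ContinuousOn (fun ξ : ℝ² => m (-ξ)) {ξ | ξ ≠ 0} :=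
    hcont.comp continuous_neg.continuousOn fun ξ hξ => neg_ne_zero.2 hξ
  refine (PiLp.continuous_toLp 2 _).comp_continuousOn <| continuousOn_pi.2 fun i => ?_
  have hproj := (EuclideanSpace.proj (𝕜 := ℂ) i).continuous
  exact Complex.continuous_re.comp_continuousOn
    ((hproj.comp_continuousOn hcont).add (hproj.comp_continuousOn hneg))

end Multiplier

/-- **Non-degeneracy of a non-odd divergence-free multiplier in two dimensions.**
If `m : ℝ² \ {0} → ℂ²` is continuous, homogeneous of degree `0`, satisfies the reality
condition `m(ξ) = conj (m(-ξ))`, the divergence-free condition `ξ · m(ξ) = 0`, and is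
not odd, then there are `k₁, k₂ ∈ ℤ²` with `|k₁| = |k₂|` such that the real vectors
`m(k₁) + m(-k₁)` and `m(k₂) + m(-k₂)` form a basis of `ℝ²`. -/
theorem multiplier_nondegenerate
    (m : EuclideanSpace ℝ (Fin 2) → EuclideanSpace ℂ (Fin 2))
    (hcont : ContinuousOn m {ξ | ξ ≠ 0})
    (hhom : ∀ ξ : EuclideanSpace ℝ (Fin 2), ξ ≠ 0 → ∀ l : ℝ, 0 < l → m (l • ξ) = m ξ)
    (hreal : ∀ ξ : EuclideanSpace ℝ (Fin 2), ξ ≠ 0 → ∀ i : Fin 2,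
      m ξ i = starRingEnd ℂ (m (-ξ) i))
    (hdiv : ∀ ξ : EuclideanSpace ℝ (Fin 2), ξ ≠ 0 →
      ∑ i : Fin 2, (ξ i : ℂ) * m ξ i = 0)
    (hnotodd : ∃ ξ : EuclideanSpace ℝ (Fin 2), ξ ≠ 0 ∧ m ξ + m (-ξ) ≠ 0) :
    ∃ k₁ k₂ : Fin 2 → ℤ,
      ‖intVec2 k₁‖ = ‖intVec2 k₂‖ ∧
      LinearIndependent ℝ ![symPart m (intVec2 k₁), symPart m (intVec2 k₂)] ∧
      Submodule.span ℝ {symPart m (intVec2 k₁), symPart m (intVec2 k₂)} = ⊤ := by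
  let U : Set ℝ² := {ξ | ξ ≠ 0} ∩ symPart m ⁻¹' {0}ᶜ
  have hU : IsOpen U :=
    (continuousOn_symPart m hcont).isOpen_inter_preimage isOpen_ne isOpen_compl_singleton
  have hsmul : ∀ ξ ∈ U, ∀ c : ℝ, c ≠ 0 → c • ξ ∈ U := fun ξ ⟨hξ, hS⟩ c hc =>
    ⟨smul_ne_zero hc hξ, by rwa [Set.mem_preimage, symPart_smul m hhom hξ hc]⟩
  obtain ⟨ξ, hξ, hodd⟩ := hnotodd
  obtain ⟨k₁, k₂, hnorm, ⟨hk₁, hS₁⟩, ⟨hk₂, hS₂⟩, hk⟩ :=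
    exists_intVec2_pair_mem hU hsmul ⟨hξ, symPart_ne_zero m hreal hξ hodd⟩ hξ
  have hS := linearIndependent_pair_of_inner_eq_zero finrank_euclideanSpace_fin hk hS₁ hS₂
    (inner_symPart_self m hdiv hk₁) (inner_symPart_self m hdiv hk₂)
  refine ⟨k₁, k₂, hnorm, hS, ?_⟩
  rw [← Matrix.range_cons_cons_empty]
  exact hS.span_eq_top_of_card_eq_finrank' (by simp)
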